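/- arXiv:1512.04200 — 8 statements merged into one kernel-verified Lean document; each statement's English description precedes it below -/
import Mathlib

section
/- Let G be a finite simple graph and let Q = (Q1,Q2) and P = (P1,P2) be two partitions of the vertex set of G such that Q1 can be partitioned into r' independent sets of G and Q2 can be partitioned into ℓ' cliques of G, while P1 can be partitioned into r independent sets of G and P2 can be partitioned into ℓ cliques of G. Then |Q1 ∩ P2| + |Q2 ∩ P1| ≤ r'·ℓ + r·ℓ'. -/
variable {V : Type*}

/-- A set of vertices is an *independent set*: no two of its vertices are adjacent. -/
def IndepSet (G : SimpleGraph V) (s : Set V) : Prop :=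
  s.Pairwise fun u v => ¬ G.Adj u v

/-- The set `W` can be partitioned into `r` (pairwise disjoint) independent sets of `G`. -/
def PartitionIntoIndepSets (r : ℕ) (G : SimpleGraph V) (W : Set V) : Prop :=
  ∃ I : Fin r → Set V, (⋃ i, I i) = W ∧ Pairwise (Function.onFun Disjoint I) ∧
    ∀ i, IndepSet G (I i)

/-- The set `W` can be partitioned into `l` (pairwise disjoint) cliques of `G`. -/
def PartitionIntoCliques (l : ℕ) (G : SimpleGraph V) (W : Set V) : Prop :=
  ∃ K : Fin l → Set V, (⋃ j, K j) = W ∧ Pairwise (Function.onFun Disjoint K) ∧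
    ∀ j, G.IsClique (K j)

/-- `(V1, V2)` is an IC-partition of the ground set `W` in `G`: `V1` and `V2` partition `W`,
`V1` is partitioned into `r` independent sets and `V2` into `l` cliques. -/
def IsICPartitionOn (r l : ℕ) (G : SimpleGraph V) (W V1 V2 : Set V) : Prop :=
  Disjoint V1 V2 ∧ V1 ∪ V2 = W ∧
    PartitionIntoIndepSets r G V1 ∧ PartitionIntoCliques l G V2

/-- `(V1, V2)` is an IC-partition of `G` realizing that `G` is an `(r,l)`-graph. -/
def IsICPartition (r l : ℕ) (G : SimpleGraph V) (V1 V2 : Set V) : Prop :=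
  IsICPartitionOn r l G Set.univ V1 V2

/-- `G` is an `(r,l)`-graph: its vertex set can be partitioned into `r` independent sets
and `l` cliques. -/
def IsRLGraph (r l : ℕ) (G : SimpleGraph V) : Prop :=
  ∃ V1 V2 : Set V, IsICPartition r l G V1 V2

/-!
An independent set and a clique share at most one vertex. Hence if `A` is covered by `r`
independent sets `Iᵢ` and `B` by `l` cliques `Kⱼ`, then `A ∩ B` is covered by the `r·l`
sets `Iᵢ ∩ Kⱼ`, each with at most one vertex. Applying this to `Q1 ∩ P2` and to `P1 ∩ Q2`
gives the bound.
-/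

theorem IndepSet.inter_clique_subsingleton {G : SimpleGraph V} {s t : Set V}
    (hs : IndepSet G s) (ht : G.IsClique t) : (s ∩ t).Subsingleton := by
  rintro a ⟨has, hat⟩ b ⟨hbs, hbt⟩
  by_contra hab
  exact hs has hbs hab (ht hat hbt hab)

theorem PartitionIntoIndepSets.ncard_inter_le_mul {G : SimpleGraph V} {r l : ℕ} {A B : Set V}
    (hA : PartitionIntoIndepSets r G A) (hB : PartitionIntoCliques l G B) :
    (A ∩ B).ncard ≤ r * l := by
  obtain ⟨I, rfl, -, hI⟩ := hA
  obtain ⟨K, rfl, -, hK⟩ := hB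
  calc ((⋃ i, I i) ∩ ⋃ j, K j).ncard
      = (⋃ i, ⋃ j, I i ∩ K j).ncard := by rw [Set.iUnion_inter_iUnion]
    _ ≤ ∑ i, (⋃ j, I i ∩ K j).ncard := Set.ncard_iUnion_le_of_fintype _
    _ ≤ ∑ i, ∑ j, (I i ∩ K j).ncard :=
        Finset.sum_le_sum fun i _ => Set.ncard_iUnion_le_of_fintype _
    _ ≤ ∑ _i : Fin r, ∑ _j : Fin l, 1 := by
        gcongr with i _ j _
        have hIK := (hI i).inter_clique_subsingleton (hK j)
        exact (Set.ncard_le_one hIK.finite).mpr hIK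
    _ = r * l := by simp

theorem hamming_distance_bound_general {V : Type*} (G : SimpleGraph V)
    (r l r' l' : ℕ) (Q1 Q2 P1 P2 : Set V)
    (hQ : IsICPartition r' l' G Q1 Q2) (hP : IsICPartition r l G P1 P2) :
    (Q1 ∩ P2).ncard + (Q2 ∩ P1).ncard ≤ r' * l + r * l' := by
  have hQP : (Q1 ∩ P2).ncard ≤ r' * l := hQ.2.2.1.ncard_inter_le_mul hP.2.2.2
  have hPQ : (P1 ∩ Q2).ncard ≤ r * l' := hP.2.2.1.ncard_inter_le_mul hQ.2.2.2
  rw [Set.inter_comm] at hPQ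
  omega

/-- if `(Q1,Q2)` is an IC-partition realizing that `G` is an `(r',l')`-graph
and `(P1,P2)` is an IC-partition realizing that `G` is an `(r,l)`-graph, then the number of
vertices placed on different sides by the two partitions is at most `r'·l + r·l'`. -/
theorem hamming_distance_bound {V : Type*} [Fintype V] (G : SimpleGraph V)
    (r l r' l' : ℕ) (Q1 Q2 P1 P2 : Set V)
    (hQ : IsICPartition r' l' G Q1 Q2) (hP : IsICPartition r l G P1 P2) :
    (Q1 ∩ P2).ncard + (Q2 ∩ P1).ncard ≤ r' * l + r * l' :=
  hamming_distance_bound_general G r l r' l' Q1 Q2 P1 P2 hQ hP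
end

section
/- Let G be a finite simple perfect graph and let (Q1,Q2) be an IC-partition of G realizing that G is an (r',ℓ')-graph. Let S be a subset of V(G) such that G − S is an (r,ℓ)-graph, and let (P1,P2) be an IC-partition of G − S realizing that G − S is an (r,ℓ)-graph. Then |(Q1 \ S) ∩ P2| + |(Q2 \ S) ∩ P1| ≤ r'·ℓ + r·ℓ'. -/
variable {V : Type*}

/-- A graph is *perfect* if for every induced subgraph the chromatic number equals the
clique number. -/
def IsPerfect (G : SimpleGraph V) : Prop :=
  ∀ W : Set V, (G.induce W).chromaticNumber = ((G.induce W).cliqueNum : ℕ∞)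

/-!
An independent set and a clique share at most one vertex, so a set partitioned into `r`
independent sets meets a set partitioned into `l` cliques in at most `r * l` vertices.
The two terms of the bound are instances of this: `(Q1 \ S) ∩ P2 ⊆ Q1 ∩ P2` and
`(Q2 \ S) ∩ P1 ⊆ P1 ∩ Q2`.
-/

open Set

variable {G : SimpleGraph V}

lemma IndepSet.subsingleton_inter_of_isClique {s t : Set V} (hs : IndepSet G s)
    (ht : G.IsClique t) : (s ∩ t).Subsingleton := by
  intro u hu v hv
  by_contra huv
  exact hs hu.1 hv.1 huv (ht hu.2 hv.2 huv)

lemma PartitionIntoIndepSets.encard_inter_le {r l : ℕ} {A B : Set V}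
    (hA : PartitionIntoIndepSets r G A) (hB : PartitionIntoCliques l G B) :
    (A ∩ B).encard ≤ (r * l : ℕ) := by
  obtain ⟨I, rfl, -, hI⟩ := hA
  obtain ⟨K, rfl, -, hK⟩ := hB
  have hcover : (⋃ i, I i) ∩ (⋃ j, K j) = ⋃ i, ⋃ j, I i ∩ K j := by
    simp_rw [iUnion_inter, inter_iUnion]
  have hcell (i : Fin r) (j : Fin l) : (I i ∩ K j).encard ≤ 1 :=
    encard_le_one_iff_subsingleton.2 ((hI i).subsingleton_inter_of_isClique (hK j))
  calc ((⋃ i, I i) ∩ (⋃ j, K j)).encard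
      ≤ ∑ i, (⋃ j, I i ∩ K j).encard := hcover ▸ encard_iUnion_le_of_fintype _
    _ ≤ ∑ _i : Fin r, ∑ _j : Fin l, (1 : ℕ∞) :=
        Finset.sum_le_sum fun i _ =>
          (encard_iUnion_le_of_fintype _).trans (Finset.sum_le_sum fun j _ => hcell i j)
    _ = (r * l : ℕ) := by simp

theorem hamming_distance_bound_deletion_general {V : Type*} (G : SimpleGraph V)
    (r l r' l' : ℕ) (Q1 Q2 : Set V)
    (hQ : IsICPartition r' l' G Q1 Q2) (S : Set V) (P1 P2 : Set V)
    (hP : IsICPartitionOn r l G Sᶜ P1 P2) :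
    ((Q1 \ S) ∩ P2).ncard + ((Q2 \ S) ∩ P1).ncard ≤ r' * l + r * l' := by
  obtain ⟨-, -, hQ1, hQ2⟩ := hQ
  obtain ⟨-, -, hP1, hP2⟩ := hP
  have h1 : ((Q1 \ S) ∩ P2).encard ≤ (r' * l : ℕ) :=
    (encard_le_encard (inter_subset_inter_left _ sdiff_subset)).trans (hQ1.encard_inter_le hP2)
  have h2 : ((Q2 \ S) ∩ P1).encard ≤ (r * l' : ℕ) := by
    rw [inter_comm]
    exact (encard_le_encard (inter_subset_inter_right _ sdiff_subset)).trans
      (hP1.encard_inter_le hQ2)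
  exact add_le_add (encard_le_coe_iff_finite_ncard_le.1 h1).2
    (encard_le_coe_iff_finite_ncard_le.1 h2).2

/-- if `(Q1,Q2)` is an IC-partition of a perfect graph `G` realizing that `G`
is an `(r',l')`-graph, `S ⊆ V(G)`, and `(P1,P2)` is an IC-partition of `G - S` realizing
that `G - S` is an `(r,l)`-graph, then
`|(Q1 \ S) ∩ P2| + |(Q2 \ S) ∩ P1| ≤ r'·l + r·l'`. -/
theorem hamming_distance_bound_deletion {V : Type*} [Fintype V] (G : SimpleGraph V)
    (hG : IsPerfect G) (r l r' l' : ℕ) (Q1 Q2 : Set V)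
    (hQ : IsICPartition r' l' G Q1 Q2) (S : Set V) (P1 P2 : Set V)
    (hP : IsICPartitionOn r l G Sᶜ P1 P2) :
    ((Q1 \ S) ∩ P2).ncard + ((Q2 \ S) ∩ P1).ncard ≤ r' * l + r * l' :=
  hamming_distance_bound_deletion_general G r l r' l' Q1 Q2 hQ S P1 P2 hP
end

section
/- Let G be a finite simple perfect graph and let ℓ be a nonnegative integer. Then either the vertex set of G can be partitioned into at most ℓ cliques, or G contains an independent set of size ℓ + 1. -/
/-!
Lovász's proof of the weak perfect graph theorem. Replacing every vertex `v` of a perfect graph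
by a clique of `k v` copies yields a graph whose chromatic number is still its clique number, the
maximum `k`-weight of a clique: by induction on the total weight, one peels off an independent
set meeting every clique of maximum weight (perfection is only needed for `0/1` weights). Weighting
each vertex by the number of maximum independent sets `A_Q` containing it, where `A_Q` misses the
clique `Q`, shows that some clique meets every maximum independent set. Removing that clique lowers
the independence number, so induction on `ℓ` partitions the vertices into `ℓ` cliques.
-/

variable {V : Type*}

open Finset

theorem sum_sub_indicator_lt {s : Finset V} {A : Set V} {k : V → ℕ} {x : V} (hxs : x ∈ s)
    (hxA : x ∈ A) (hkx : 0 < k x) : ∑ v ∈ s, (k v - A.indicator 1 v) < ∑ v ∈ s, k v :=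
  sum_lt_sum (fun v _ => Nat.sub_le _ _) ⟨x, hxs, by simpa [hxA] using hkx⟩

theorem sum_countP_mem [DecidableEq V] (s : Finset V) (𝒞 : Multiset (Finset V)) :
    ∑ v ∈ s, 𝒞.countP (v ∈ ·) = (𝒞.map fun A => #(s ∩ A)).sum := by
  induction 𝒞 using Multiset.induction_on with
  | empty => simp
  | cons A 𝒞 ih => simp [Multiset.countP_cons, sum_add_distrib, ih, add_comm]

namespace SimpleGraph

variable (G : SimpleGraph V)

open Classical in
noncomputable def maxCliqueWeight [Fintype V] (k : V → ℕ) : ℕ :=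
  (univ.filter fun Q : Finset V => G.IsClique (Q : Set V)).sup fun Q => ∑ v ∈ Q, k v

/-- `𝒞` is the list of colour classes, projected to `G`, of a proper colouring of the graph
obtained from `G` by replacing each vertex `v` by a clique of `k v` copies (Lovász's replication). -/
structure IsWeightedColoring [DecidableEq V] (k : V → ℕ) (𝒞 : Multiset (Finset V)) : Prop where
  indepSet : ∀ A ∈ 𝒞, IndepSet G (A : Set V)
  pos_of_mem : ∀ A ∈ 𝒞, ∀ v ∈ A, 0 < k v
  le_countP : ∀ v, k v ≤ 𝒞.countP (v ∈ ·)

variable {G}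

section Weight

variable [Fintype V] {k : V → ℕ} {Q : Finset V}

theorem sum_le_maxCliqueWeight (hQ : G.IsClique (Q : Set V)) :
    ∑ v ∈ Q, k v ≤ G.maxCliqueWeight k := by
  classical
  exact le_sup (f := fun Q : Finset V => ∑ v ∈ Q, k v) (by simpa using hQ)

theorem maxCliqueWeight_lt_iff {n : ℕ} (hn : 0 < n) :
    G.maxCliqueWeight k < n ↔ ∀ Q : Finset V, G.IsClique (Q : Set V) → ∑ v ∈ Q, k v < n := by
  classical
  simp [maxCliqueWeight, Finset.sup_lt_iff hn]

theorem maxCliqueWeight_mono : Monotone G.maxCliqueWeight := by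
  classical
  exact fun k k' hk => sup_mono_fun fun Q _ => sum_le_sum fun v _ => hk v

theorem le_maxCliqueWeight (v : V) : k v ≤ G.maxCliqueWeight k := by
  simpa using sum_le_maxCliqueWeight (k := k) (Q := {v}) (by simp)

end Weight

variable [DecidableEq V]

theorem card_inter_le_one_of_isClique {A Q : Finset V} (hA : IndepSet G (A : Set V))
    (hQ : G.IsClique (Q : Set V)) : #(Q ∩ A) ≤ 1 := by
  refine card_le_one.2 fun a ha b hb => by_contra fun hab => ?_
  simp only [mem_inter] at ha hb
  exact hA ha.2 hb.2 hab (hQ ha.1 hb.1 hab)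

theorem sum_countP_mem_of_isClique {Q : Finset V} (hQ : G.IsClique (Q : Set V))
    {𝒞 : Multiset (Finset V)} (h𝒞 : ∀ A ∈ 𝒞, IndepSet G (A : Set V)) :
    ∑ v ∈ Q, 𝒞.countP (v ∈ ·) = 𝒞.countP fun A => (Q ∩ A).Nonempty := by
  rw [sum_countP_mem]
  induction 𝒞 using Multiset.induction_on with
  | empty => simp
  | cons A 𝒞 ih =>
    have hA := card_inter_le_one_of_isClique (h𝒞 A (Multiset.mem_cons_self A 𝒞)) hQ
    rw [Multiset.map_cons, Multiset.sum_cons, Multiset.countP_cons,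
      ih fun B hB => h𝒞 B (Multiset.mem_cons_of_mem hB), add_comm]
    split_ifs with h
    · have := card_pos.2 h; omega
    · rw [not_nonempty_iff_eq_empty.1 h, card_empty]

namespace IsWeightedColoring

variable {k : V → ℕ} {𝒞 : Multiset (Finset V)}

theorem cons {A : Finset V} (h : G.IsWeightedColoring (k - (A : Set V).indicator 1) 𝒞)
    (hA : IndepSet G (A : Set V)) (hAk : ∀ v ∈ A, 0 < k v) : G.IsWeightedColoring k (A ::ₘ 𝒞) where
  indepSet B hB := (Multiset.mem_cons.1 hB).elim (· ▸ hA) (h.indepSet B)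
  pos_of_mem B hB := (Multiset.mem_cons.1 hB).elim (· ▸ hAk) fun hB v hv =>
    (h.pos_of_mem B hB v hv).trans_le (Nat.sub_le _ _)
  le_countP v := by
    have := h.le_countP v
    by_cases hv : v ∈ A <;> simp_all

theorem inter_nonempty (h : G.IsWeightedColoring k 𝒞) {Q : Finset V} (hQ : G.IsClique (Q : Set V))
    (hw : Multiset.card 𝒞 ≤ ∑ v ∈ Q, k v) {A : Finset V} (hA : A ∈ 𝒞) : (Q ∩ A).Nonempty := by
  have hle : ∑ v ∈ Q, k v ≤ 𝒞.countP fun A => (Q ∩ A).Nonempty :=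
    (sum_le_sum fun v _ => h.le_countP v).trans (sum_countP_mem_of_isClique hQ h.indepSet).le
  exact Multiset.countP_eq_card.1 ((Multiset.countP_le_card _ _).antisymm (hw.trans hle)) A hA

theorem maxCliqueWeight_sub_indicator_lt [Fintype V] {x : V}
    (h : G.IsWeightedColoring (k - ({x} : Set V).indicator 1) 𝒞)
    (hcard : Multiset.card 𝒞 ≤ G.maxCliqueWeight k) {A : Finset V} (hA : A ∈ 𝒞) (hxA : x ∈ A) :
    G.maxCliqueWeight (k - (A : Set V).indicator 1) < G.maxCliqueWeight k := by
  have hAk : ∀ v ∈ A, 0 < k v := fun v hv => (h.pos_of_mem A hA v hv).trans_le (Nat.sub_le _ _)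
  rw [maxCliqueWeight_lt_iff ((hAk x hxA).trans_le (le_maxCliqueWeight x))]
  intro Q hQ
  by_cases hQA : (Q ∩ A).Nonempty
  · obtain ⟨v, hv⟩ := hQA
    rw [mem_inter] at hv
    exact (sum_sub_indicator_lt hv.1 (mem_coe.2 hv.2) (hAk v hv.2)).trans_le
      (sum_le_maxCliqueWeight hQ)
  · -- A clique missing `A` misses `x`, so it has the same weight for `k` and for `k - 1_{x}`,
    -- and by `inter_nonempty` that weight is not maximal.
    have hxQ : x ∉ Q := fun hxQ => hQA ⟨x, mem_inter.2 ⟨hxQ, hxA⟩⟩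
    calc ∑ v ∈ Q, (k v - (A : Set V).indicator 1 v)
        ≤ ∑ v ∈ Q, k v := sum_le_sum fun v _ => Nat.sub_le _ _
      _ = ∑ v ∈ Q, (k v - ({x} : Set V).indicator 1 v) :=
        sum_congr rfl fun v hv => by simp [ne_of_mem_of_not_mem hv hxQ]
      _ < G.maxCliqueWeight k :=
        lt_of_not_ge fun hw => hQA (h.inter_nonempty hQ (hcard.trans hw) hA)

end IsWeightedColoring

end SimpleGraph

theorem PartitionIntoCliques.cons {l : ℕ} {G : SimpleGraph V} {W Q : Set V}
    (h : PartitionIntoCliques l G W) (hQ : G.IsClique Q) (hQW : Disjoint Q W) :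
    PartitionIntoCliques (l + 1) G (Q ∪ W) := by
  obtain ⟨K, rfl, hK, hKc⟩ := h
  refine ⟨Fin.cons Q K, Set.iUnion_cons K Q, pairwise_fin_succ_iff_of_isSymm.2 ⟨fun i => ?_, hK⟩,
    Fin.cases hQ hKc⟩
  exact hQW.mono_right (Set.subset_iUnion K i)

open SimpleGraph

namespace IsPerfect

variable [Fintype V] {G : SimpleGraph V}

theorem exists_isWeightedColoring_of_le_one [DecidableEq V] (hG : IsPerfect G) {k : V → ℕ}
    (hk : ∀ v, k v ≤ 1) :
    ∃ 𝒞, G.IsWeightedColoring k 𝒞 ∧ Multiset.card 𝒞 ≤ G.maxCliqueWeight k := by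
  classical
  set W : Set V := {v | 0 < k v}
  have hω : (G.induce W).cliqueNum ≤ G.maxCliqueWeight k := by
    obtain ⟨t, ht⟩ := (G.induce W).exists_isNClique_cliqueNum
    rw [isNClique_induce_iff] at ht
    rw [← ht.card_eq, card_eq_sum_ones]
    refine le_of_eq_of_le (sum_congr rfl fun v hv => ?_) (sum_le_maxCliqueWeight ht.isClique)
    obtain ⟨w, -, rfl⟩ := mem_map.1 hv
    exact (le_antisymm (hk w) w.2).symm
  obtain ⟨c⟩ : (G.induce W).Colorable (G.maxCliqueWeight k) := by
    rw [← chromaticNumber_le_iff_colorable, hG W]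
    exact_mod_cast hω
  refine ⟨(univ : Finset (Fin _)).val.map fun i => (univ.filter (c · = i)).map (.subtype _),
    ⟨?_, ?_, fun v => ?_⟩, by simp⟩
  · simp only [Multiset.mem_map, mem_val, mem_univ, true_and]
    rintro _ ⟨i, rfl⟩ a ha b hb hab hadj
    simp only [coe_map, Function.Embedding.subtype_apply, coe_filter, mem_univ, true_and,
      Set.mem_image] at ha hb
    obtain ⟨a, rfl, rfl⟩ := ha
    obtain ⟨b, hb, rfl⟩ := hb
    exact c.valid hadj hb.symm
  · simp only [Multiset.mem_map, mem_val, mem_univ, true_and]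
    rintro _ ⟨i, rfl⟩ v hv
    obtain ⟨w, -, rfl⟩ := mem_map.1 hv
    exact w.2
  · rcases Nat.eq_zero_or_pos (k v) with hv | hv
    · simp [hv]
    refine (hk v).trans (Multiset.countP_pos.2
      ⟨_, Multiset.mem_map_of_mem _ (mem_univ (c ⟨v, hv⟩)), by simpa [W] using hv⟩)

theorem exists_isWeightedColoring [DecidableEq V] (hG : IsPerfect G) (k : V → ℕ) :
    ∃ 𝒞, G.IsWeightedColoring k 𝒞 ∧ Multiset.card 𝒞 ≤ G.maxCliqueWeight k := by
  induction hn : ∑ v, k v using Nat.strong_induction_on generalizing k with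
  | _ n ih =>
  by_cases hk : ∀ v, k v ≤ 1
  · exact hG.exists_isWeightedColoring_of_le_one hk
  obtain ⟨x, hx⟩ : ∃ x, 1 < k x := by simpa using hk
  obtain ⟨𝒞', h𝒞', hcard'⟩ := ih _
    (hn ▸ sum_sub_indicator_lt (mem_univ x) (Set.mem_singleton x) (by omega))
    (k - ({x} : Set V).indicator 1) rfl
  obtain ⟨A, hA, hxA⟩ : ∃ A ∈ 𝒞', x ∈ A := by
    refine Multiset.countP_pos.1 (lt_of_lt_of_le ?_ (h𝒞'.le_countP x))
    simp only [Pi.sub_apply, Set.indicator_of_mem (Set.mem_singleton x), Pi.one_apply]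
    omega
  have hAk : ∀ v ∈ A, 0 < k v := fun v hv => (h𝒞'.pos_of_mem A hA v hv).trans_le (Nat.sub_le _ _)
  have hlt := h𝒞'.maxCliqueWeight_sub_indicator_lt
    (hcard'.trans (maxCliqueWeight_mono fun v => Nat.sub_le _ _)) hA hxA
  obtain ⟨𝒞, h𝒞, hcard⟩ := ih _
    (hn ▸ sum_sub_indicator_lt (mem_univ x) (mem_coe.2 hxA) (hAk x hxA))
    (k - (A : Set V).indicator 1) rfl
  exact ⟨A ::ₘ 𝒞, h𝒞.cons (h𝒞'.indepSet A hA) hAk, by rw [Multiset.card_cons]; omega⟩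

theorem exists_isClique_forall_inter_nonempty [DecidableEq V] (hG : IsPerfect G) (W : Finset V)
    {α : ℕ} (hα : 0 < α) (hW : ∀ S ⊆ W, IndepSet G (S : Set V) → #S ≤ α) :
    ∃ Q ⊆ W, G.IsClique (Q : Set V) ∧
      ∀ S ⊆ W, IndepSet G (S : Set V) → #S = α → (S ∩ Q).Nonempty := by
  classical
  -- Otherwise every clique `Q` is missed by some maximum independent set `A Q`. For the weights
  -- `k v = #{Q | v ∈ A Q}` every clique weighs less than the number `N` of cliques, so `k` is
  -- covered by fewer than `N` independent sets of size `≤ α`, although its total weight is `α * N`.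
  by_contra! hcon
  have hmiss : ∀ Q : {Q : Finset V // G.IsClique (Q : Set V)}, ∃ S ⊆ W,
      IndepSet G (S : Set V) ∧ #S = α ∧ ¬(Q.1 ∩ S).Nonempty := by
    rintro ⟨Q, hQ⟩
    obtain ⟨S, hSW, hS, hSα, hSQ⟩ := hcon (Q ∩ W) inter_subset_right (hQ.subset (by simp))
    refine ⟨S, hSW, hS, hSα, fun ⟨v, hv⟩ => ?_⟩
    rw [mem_inter] at hv
    simpa [hSQ] using mem_inter.2 ⟨hv.2, mem_inter.2 ⟨hv.1, hSW hv.2⟩⟩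
  choose A hAW hA hAα hAQ using hmiss
  set 𝒜 := (univ : Finset {Q : Finset V // G.IsClique (Q : Set V)}).val.map A
  have h𝒜 : 0 < Multiset.card 𝒜 := by
    simpa [𝒜, Fintype.card_pos_iff] using ⟨∅, by simp⟩
  have h𝒜W : ∀ B ∈ 𝒜, B ⊆ W ∧ IndepSet G (B : Set V) := by
    simp only [𝒜, Multiset.mem_map, mem_val, mem_univ, true_and]
    rintro _ ⟨Q, rfl⟩
    exact ⟨hAW Q, hA Q⟩
  obtain ⟨𝒞, h𝒞, hcard⟩ := hG.exists_isWeightedColoring fun v => 𝒜.countP (v ∈ ·)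
  have hweight : G.maxCliqueWeight (fun v => 𝒜.countP (v ∈ ·)) < Multiset.card 𝒜 := by
    refine (maxCliqueWeight_lt_iff h𝒜).2 fun Q hQ => ?_
    rw [sum_countP_mem_of_isClique hQ fun B hB => (h𝒜W B hB).2]
    refine lt_of_le_of_ne (Multiset.countP_le_card _ _) fun h => hAQ ⟨Q, hQ⟩ ?_
    exact Multiset.countP_eq_card.1 h _ (Multiset.mem_map_of_mem _ (mem_univ _))
  have hCW : ∀ C ∈ 𝒞, C ⊆ W := fun C hC v hv => by
    obtain ⟨B, hB, hvB⟩ := Multiset.countP_pos.1 (h𝒞.pos_of_mem C hC v hv)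
    exact (h𝒜W B hB).1 hvB
  have hC : ∀ C ∈ 𝒞, #C ≤ α := fun C hC => hW C (hCW C hC) (h𝒞.indepSet C hC)
  have : α * Multiset.card 𝒜 ≤ α * Multiset.card 𝒞 := calc
    α * Multiset.card 𝒜 = ∑ v, 𝒜.countP (v ∈ ·) := by
      simp [sum_countP_mem, 𝒜, hAα, mul_comm]
    _ ≤ ∑ v, 𝒞.countP (v ∈ ·) := sum_le_sum fun v _ => h𝒞.le_countP v
    _ = (𝒞.map card).sum := by simp [sum_countP_mem]
    _ ≤ Multiset.card (𝒞.map card) • α := Multiset.sum_le_card_nsmul _ _ (by simpa using hC)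
    _ = α * Multiset.card 𝒞 := by simp [mul_comm]
  have := Nat.le_of_mul_le_mul_left this hα
  omega

theorem partitionIntoCliques [DecidableEq V] (hG : IsPerfect G) (l : ℕ) (W : Finset V)
    (hW : ∀ S ⊆ W, IndepSet G (S : Set V) → #S ≤ l) : PartitionIntoCliques l G W := by
  induction l generalizing W with
  | zero =>
    obtain rfl : W = ∅ := eq_empty_of_forall_notMem fun v hv => by
      simpa using hW {v} (singleton_subset_iff.2 hv) (by simp [IndepSet])
    exact ⟨Fin.elim0, by simp, fun i => i.elim0, fun i => i.elim0⟩
  | succ l ih =>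
    obtain ⟨Q, hQW, hQ, hmeet⟩ := hG.exists_isClique_forall_inter_nonempty W l.succ_pos hW
    have hW' : ∀ S ⊆ W \ Q, IndepSet G (S : Set V) → #S ≤ l := fun S hSW hS => by
      by_contra! h
      have hSW' := hSW.trans sdiff_subset
      obtain ⟨v, hv⟩ := hmeet S hSW' hS (le_antisymm (hW S hSW' hS) h)
      exact (mem_sdiff.1 (hSW (mem_inter.1 hv).1)).2 (mem_inter.1 hv).2
    have := (ih (W \ Q) hW').cons hQ (by simpa using disjoint_sdiff_self_right)
    rwa [coe_sdiff, Set.union_sdiff_cancel (coe_subset.2 hQW)] at this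

end IsPerfect

/-- a perfect graph either has a partition of its vertex set into at most `l`
cliques, or contains an independent set of size `l + 1`. -/
theorem perfect_cliquePartition_or_indepSet {V : Type*} [Fintype V] (G : SimpleGraph V)
    (hG : IsPerfect G) (l : ℕ) :
    PartitionIntoCliques l G Set.univ ∨
      ∃ s : Finset V, IndepSet G (↑s : Set V) ∧ s.card = l + 1 := by
  classical
  by_cases h : ∀ S : Finset V, IndepSet G (S : Set V) → #S ≤ l
  · left
    simpa using hG.partitionIntoCliques l univ fun S _ => h S
  · right
    obtain ⟨S, hS, hlS⟩ : ∃ S : Finset V, IndepSet G (S : Set V) ∧ l < #S := by simpa using h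
    obtain ⟨s, hsS, hs⟩ := exists_subset_card_eq hlS
    exact ⟨s, hS.mono (coe_subset.2 hsS), hs⟩
end

section
/- (Weak Perfect Graph Theorem, Lovász) A finite simple graph G is perfect if and only if its complement is perfect. -/
variable {V : Type*}

/-!
Perfection can be characterised symmetrically in `G` and `Gᶜ`: `G` is perfect iff
`|s| ≤ ω(s) α(s)` for every vertex set `s`, where `α(s)` is the clique number of `Gᶜ` on `s`.
Necessity is immediate, since the colour classes of an `ω(s)`-colouring of `s` are independent.
For sufficiency we follow Gasparian. Let `s` be minimal among the sets that are not
`ω(s)`-colourable, `A ⊆ s` an independent set of size `α`, and for `v ∈ A` let `c v` be an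
`ω`-colouring of `s - v`. The set `A` and the colour classes of all `c v` form `αω + 1`
independent sets covering every vertex of `s` exactly `α` times. By minimality each of them is
disjoint from an `ω`-clique of `s`, and counting then forces the clique chosen for one set to meet
every other set exactly once. So the incidence matrix of the sets against these cliques is
`J - I`, which is nonsingular, and `αω + 1 ≤ |s|`.
-/

open Finset

theorem linearIndependent_of_dotProduct_eq_ite {ι n K : Type*} [Fintype ι] [DecidableEq ι]
    [Nontrivial ι] [Fintype n] [Field K] [CharZero K] {a b : ι → n → K}
    (h : ∀ k l, a k ⬝ᵥ b l = if k = l then 0 else 1) : LinearIndependent K a := by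
  rw [Fintype.linearIndependent_iff]
  intro g hg
  have hg_eq : ∀ l, g l = ∑ k, g k := fun l => by
    have := congrArg (· ⬝ᵥ b l) hg
    simp only [sum_dotProduct, smul_dotProduct, h, smul_eq_mul, mul_ite, mul_zero, mul_one,
      zero_dotProduct] at this
    rw [← sum_erase_add _ _ (mem_univ l), if_pos rfl, add_zero,
      sum_congr rfl fun k hk => if_neg (ne_of_mem_erase hk)] at this
    rw [← sum_erase_add _ _ (mem_univ l), this, zero_add]
  have hsum : (Fintype.card ι - 1 : K) * ∑ k, g k = 0 := by
    have := sum_congr rfl fun l (_ : l ∈ univ) => hg_eq l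
    rw [sum_const, card_univ, nsmul_eq_mul] at this
    linear_combination -this
  have hcard : (Fintype.card ι - 1 : K) ≠ 0 := by
    rw [sub_ne_zero]
    exact_mod_cast (Fintype.one_lt_card (α := ι)).ne'
  intro l
  rw [hg_eq l, (mul_eq_zero.1 hsum).resolve_left hcard]

theorem card_le_card_of_card_inter_eq_ite {ι : Type*} [DecidableEq V] [Fintype ι] [DecidableEq ι]
    [Nontrivial ι] {s : Finset V} {S C : ι → Finset V} (hS : ∀ k, S k ⊆ s)
    (h : ∀ k l, #(S k ∩ C l) = if k = l then 0 else 1) : Fintype.card ι ≤ #s := by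
  let a : ι → s → ℚ := fun k x => if ↑x ∈ S k then 1 else 0
  let b : ι → s → ℚ := fun l x => if ↑x ∈ C l then 1 else 0
  have hab : ∀ k l, a k ⬝ᵥ b l = if k = l then 0 else 1 := fun k l => by
    have : a k ⬝ᵥ b l = #(S k ∩ C l) := by
      simp only [dotProduct, a, b, ite_zero_mul_ite_zero, mul_one]
      rw [sum_coe_sort s (fun x => if x ∈ S k ∧ x ∈ C l then (1 : ℚ) else 0), sum_boole,
        Nat.cast_inj]
      congr 1
      ext x
      simpa [mem_filter] using fun hx _ => hS k hx
    rw [this, h]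
    split_ifs <;> simp
  simpa using (linearIndependent_of_dotProduct_eq_ite hab).fintype_card_le_finrank

theorem sum_card_erase_add_card_inter [DecidableEq V] (A C : Finset V) :
    ∑ v ∈ A, #(C.erase v) + #(A ∩ C) = #A * #C := by
  rw [← filter_mem_eq_inter, card_filter, ← sum_add_distrib, ← smul_eq_mul, ← sum_const]
  refine sum_congr rfl fun v _ => ?_
  split_ifs with hv
  · exact card_erase_add_one hv
  · rw [erase_eq_of_notMem hv, add_zero]

namespace SimpleGraph

variable {G : SimpleGraph V}

theorem card_le_cliqueNum_induce {s t : Finset V} (hts : t ⊆ s) (ht : G.IsClique (t : Set V)) :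
    #t ≤ (G.induce s).cliqueNum := by
  classical
  have : (G.induce s).IsNClique #t (t.subtype (· ∈ (s : Set V))) := by
    rw [isNClique_induce_iff,
      subtype_map_of_mem (p := (· ∈ (s : Set V))) fun x hx => mem_coe.2 (hts hx)]
    exact ⟨ht, rfl⟩
  exact this.card_eq ▸ this.isClique.card_le_cliqueNum

theorem exists_isNClique_cliqueNum_induce (G : SimpleGraph V) (s : Finset V) :
    ∃ t ⊆ s, G.IsNClique (G.induce s).cliqueNum t := by
  obtain ⟨t, ht⟩ := (G.induce s).exists_isNClique_cliqueNum
  rw [isNClique_induce_iff] at ht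
  refine ⟨_, fun x hx => ?_, ht⟩
  obtain ⟨y, -, rfl⟩ := mem_map.1 hx
  exact mem_coe.1 y.2

theorem cliqueNum_induce_mono {s t : Finset V} (h : s ⊆ t) :
    (G.induce s).cliqueNum ≤ (G.induce t).cliqueNum := by
  obtain ⟨u, hus, hu⟩ := G.exists_isNClique_cliqueNum_induce s
  exact hu.card_eq ▸ card_le_cliqueNum_induce (hus.trans h) hu.isClique

theorem one_le_cliqueNum_induce {s : Finset V} (hs : s.Nonempty) :
    1 ≤ (G.induce s).cliqueNum := by
  obtain ⟨v, hv⟩ := hs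
  simpa using card_le_cliqueNum_induce (G := G) (singleton_subset_iff.2 hv) (by simp)

theorem IsClique.card_inter_le_one_of_isIndepSet [DecidableEq V] {s t : Finset V}
    (hs : G.IsClique (s : Set V)) (ht : G.IsIndepSet (t : Set V)) : #(s ∩ t) ≤ 1 := by
  refine card_le_one.2 fun u hu v hv => by_contra fun huv => ?_
  rw [mem_inter] at hu hv
  exact ht hu.2 hv.2 huv (hs hu.1 hv.1 huv)

/-- A colouring of the subgraph induced on `s`, recorded as a function on all of `V` so that
colourings of different vertex sets live in the same type. -/
def IsColoringOn (G : SimpleGraph V) (s : Finset V) (n : ℕ) (c : V → ℕ) : Prop :=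
  (∀ v ∈ s, c v < n) ∧ ∀ u ∈ s, ∀ v ∈ s, G.Adj u v → c u ≠ c v

theorem isColoringOn_empty (G : SimpleGraph V) (n : ℕ) (c : V → ℕ) :
    G.IsColoringOn ∅ n c := by
  simp [IsColoringOn]

namespace IsColoringOn

variable {s : Finset V} {n : ℕ} {c : V → ℕ}

theorem mono_colors {m : ℕ} (hc : G.IsColoringOn s n c) (h : n ≤ m) : G.IsColoringOn s m c :=
  ⟨fun v hv => (hc.1 v hv).trans_le h, hc.2⟩

theorem isIndepSet_filter (hc : G.IsColoringOn s n c) (j : ℕ) :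
    G.IsIndepSet (({x ∈ s | c x = j} : Finset V) : Set V) := by
  intro u hu v hv _ huv
  simp only [coe_filter, Set.mem_ofPred_eq] at hu hv
  exact hc.2 u hu.1 v hv.1 huv (hu.2.trans hv.2.symm)

theorem sum_card_filter_inter [DecidableEq V] (hc : G.IsColoringOn s n c) (C : Finset V) :
    ∑ j : Fin n, #({x ∈ s | c x = j} ∩ C) = #(s ∩ C) := by
  rw [card_eq_sum_card_fiberwise fun x hx => mem_range.2 (hc.1 x (mem_inter.1 hx).1),
    ← Fin.sum_univ_eq_sum_range fun j => #({x ∈ s ∩ C | c x = j})]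
  simp only [filter_inter]

theorem card_le_mul (hc : G.IsColoringOn s n c) : #s ≤ n * (Gᶜ.induce s).cliqueNum := by
  classical
  calc #s = ∑ j ∈ range n, #{x ∈ s | c x = j} :=
        card_eq_sum_card_fiberwise fun x hx => mem_range.2 (hc.1 x hx)
    _ ≤ ∑ _j ∈ range n, (Gᶜ.induce s).cliqueNum := sum_le_sum fun j _ =>
        card_le_cliqueNum_induce (filter_subset _ s) ((isClique_compl _).2 (hc.isIndepSet_filter j))
    _ = n * (Gᶜ.induce s).cliqueNum := by simp

theorem union_indepSet [DecidableEq V] {S : Finset V} (hc : G.IsColoringOn (s \ S) n c)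
    (hS : G.IsIndepSet (S : Set V)) :
    G.IsColoringOn s (n + 1) fun v => if v ∈ S then n else c v := by
  constructor
  · intro v hv
    dsimp only
    split_ifs with h
    · exact n.lt_succ_self
    · exact (hc.1 v (mem_sdiff.2 ⟨hv, h⟩)).trans n.lt_succ_self
  · intro u hu v hv huv
    by_cases hu' : u ∈ S <;> by_cases hv' : v ∈ S <;> simp only [hu', hv', if_true, if_false]
    · exact absurd huv (hS hu' hv' huv.ne)
    · exact (hc.1 v (mem_sdiff.2 ⟨hv, hv'⟩)).ne'
    · exact (hc.1 u (mem_sdiff.2 ⟨hu, hu'⟩)).ne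
    · exact hc.2 u (mem_sdiff.2 ⟨hu, hu'⟩) v (mem_sdiff.2 ⟨hv, hv'⟩) huv

end IsColoringOn

theorem colorable_induce_iff (s : Finset V) (n : ℕ) :
    (G.induce s).Colorable n ↔ ∃ c, G.IsColoringOn s n c := by
  classical
  rw [colorable_iff_exists_bdd_nat_coloring]
  constructor
  · rintro ⟨C, hC⟩
    refine ⟨fun v => if h : v ∈ s then C ⟨v, h⟩ else 0,
      fun v hv => by simpa [hv] using hC _, fun u hu v hv huv => ?_⟩
    simpa [hu, hv] using C.valid (v := ⟨u, hu⟩) (w := ⟨v, hv⟩) (by simpa using huv)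
  · rintro ⟨c, hc⟩
    exact ⟨Coloring.mk (fun v => c v) fun {u v} huv =>
      hc.2 u (mem_coe.1 u.2) v (mem_coe.1 v.2) huv, fun v => hc.1 v (mem_coe.1 v.2)⟩

theorem card_inter_eq_ite_of_sum_card_inter {ι : Type*} [Fintype ι] [DecidableEq ι]
    [DecidableEq V] {F C : ι → Finset V} (hF : ∀ k, G.IsIndepSet (F k : Set V))
    (hC : ∀ l, G.IsClique (C l : Set V)) (hFC : ∀ l, Disjoint (F l) (C l))
    (hsum : ∀ l, ∑ k, #(F k ∩ C l) = Fintype.card ι - 1) (k l : ι) :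
    #(F k ∩ C l) = if k = l then 0 else 1 := by
  have hl : #(F l ∩ C l) = 0 := card_eq_zero.2 (disjoint_iff_inter_eq_empty.1 (hFC l))
  split_ifs with hkl
  · exact hkl ▸ hl
  have hle : ∀ k ∈ univ.erase l, #(F k ∩ C l) ≤ 1 := fun k _ => by
    rw [inter_comm]
    exact (hC l).card_inter_le_one_of_isIndepSet (hF k)
  have hsum' : ∑ k ∈ univ.erase l, #(F k ∩ C l) = ∑ k ∈ univ.erase l, 1 := by
    rw [sum_erase univ (f := fun k => #(F k ∩ C l)) hl, hsum, sum_const,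
      card_erase_of_mem (mem_univ l), card_univ, smul_eq_mul, mul_one]
  exact (sum_eq_sum_iff_of_le hle).1 hsum' k (mem_erase.2 ⟨hkl, mem_univ k⟩)

section Gasparian

variable [DecidableEq V] {s A : Finset V} {ω : ℕ} {c : A → V → ℕ}

def gasparianFamily (s A : Finset V) (ω : ℕ) (c : A → V → ℕ) :
    Option (A × Fin ω) → Finset V
  | none => A
  | some (v, j) => {x ∈ s.erase v | c v x = j}

theorem gasparianFamily_subset (hAs : A ⊆ s) : ∀ k, gasparianFamily s A ω c k ⊆ s
  | none => hAs
  | some _ => (filter_subset _ _).trans (erase_subset _ _)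

theorem isIndepSet_gasparianFamily (hA : G.IsIndepSet (A : Set V))
    (hc : ∀ v : A, G.IsColoringOn (s.erase v) ω (c v)) :
    ∀ k, G.IsIndepSet (gasparianFamily s A ω c k : Set V)
  | none => hA
  | some (v, j) => (hc v).isIndepSet_filter j

theorem sum_card_gasparianFamily_inter (hc : ∀ v : A, G.IsColoringOn (s.erase v) ω (c v))
    {C : Finset V} (hC : C ⊆ s) : ∑ k, #(gasparianFamily s A ω c k ∩ C) = #A * #C := by
  have hclass : ∀ v : A,
      ∑ j : Fin ω, #(gasparianFamily s A ω c (some (v, j)) ∩ C) = #(C.erase v) := fun v =>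
    ((hc v).sum_card_filter_inter C).trans (by rw [erase_inter, inter_eq_right.2 hC])
  rw [Fintype.sum_option, Fintype.sum_prod_type]
  simp only [hclass]
  rw [sum_coe_sort A fun v => #(C.erase v), add_comm]
  exact sum_card_erase_add_card_inter A C

theorem mul_lt_card_of_forall_exists_isNClique_disjoint (hAs : A ⊆ s)
    (hA : G.IsIndepSet (A : Set V)) (hc : ∀ v : A, G.IsColoringOn (s.erase v) ω (c v))
    (hdisj : ∀ S ⊆ s, G.IsIndepSet (S : Set V) →
      ∃ C ⊆ s, G.IsNClique ω C ∧ Disjoint S C)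
    (hpos : 0 < #A * ω) : #A * ω < #s := by
  set F := gasparianFamily s A ω c
  have hcard : Fintype.card (Option (A × Fin ω)) = #A * ω + 1 := by simp
  have : Nontrivial (Option (A × Fin ω)) := Fintype.one_lt_card_iff_nontrivial.1 (by omega)
  choose C hCs hC hFC using fun k =>
    hdisj (F k) (gasparianFamily_subset hAs k) (isIndepSet_gasparianFamily hA hc k)
  have hinc := card_inter_eq_ite_of_sum_card_inter (isIndepSet_gasparianFamily hA hc)
    (fun l => (hC l).isClique) hFC fun l => by
      rw [sum_card_gasparianFamily_inter hc (hCs l), (hC l).card_eq, hcard, Nat.add_sub_cancel]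
  have := card_le_card_of_card_inter_eq_ite (gasparianFamily_subset hAs) hinc
  omega

end Gasparian

theorem exists_isNClique_disjoint_of_minimal {s S : Finset V}
    (hmin : ∀ t ⊂ s, ∃ c, G.IsColoringOn t (G.induce t).cliqueNum c)
    (hs : ¬∃ c, G.IsColoringOn s (G.induce s).cliqueNum c) (hSs : S ⊆ s)
    (hS : G.IsIndepSet (S : Set V)) :
    ∃ C ⊆ s, G.IsNClique (G.induce s).cliqueNum C ∧ Disjoint S C := by
  classical
  obtain ⟨C, hCsS, hC⟩ := G.exists_isNClique_cliqueNum_induce (s \ S)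
  suffices h : (G.induce s).cliqueNum ≤ (G.induce (s \ S : Finset V)).cliqueNum by
    rw [le_antisymm (cliqueNum_induce_mono sdiff_subset) h] at hC
    exact ⟨C, hCsS.trans sdiff_subset, hC, (subset_sdiff.1 hCsS).2.symm⟩
  by_contra! hlt
  have hS0 : S.Nonempty := nonempty_iff_ne_empty.2 fun h => by
    rw [h, sdiff_empty] at hlt
    exact hlt.false
  obtain ⟨c, hc⟩ := hmin _ (sdiff_ssubset hSs hS0)
  exact hs ⟨_, (hc.union_indepSet hS).mono_colors hlt⟩

theorem mul_lt_card_of_minimal_not_colorable {s : Finset V}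
    (hmin : ∀ t ⊂ s, ∃ c, G.IsColoringOn t (G.induce t).cliqueNum c)
    (hs : ¬∃ c, G.IsColoringOn s (G.induce s).cliqueNum c) :
    (G.induce s).cliqueNum * (Gᶜ.induce s).cliqueNum < #s := by
  classical
  have hne : s.Nonempty :=
    nonempty_iff_ne_empty.2 fun h => hs ⟨fun _ => 0, h ▸ isColoringOn_empty G _ _⟩
  obtain ⟨A, hAs, hA⟩ := Gᶜ.exists_isNClique_cliqueNum_induce s
  have hc : ∀ v : A, ∃ c, G.IsColoringOn (s.erase v) (G.induce s).cliqueNum c := fun v => by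
    obtain ⟨c, hc⟩ := hmin _ (erase_ssubset (hAs v.2))
    exact ⟨c, hc.mono_colors (cliqueNum_induce_mono (erase_subset _ _))⟩
  choose c hc using hc
  rw [mul_comm, ← hA.card_eq]
  refine mul_lt_card_of_forall_exists_isNClique_disjoint hAs ((isClique_compl _).1 hA.isClique) hc
    (fun S hSs hS => exists_isNClique_disjoint_of_minimal hmin hs hSs hS) ?_
  rw [hA.card_eq]
  exact Nat.mul_pos (one_le_cliqueNum_induce hne) (one_le_cliqueNum_induce hne)

theorem exists_isColoringOn_of_forall_card_le
    (h : ∀ t : Finset V, #t ≤ (G.induce t).cliqueNum * (Gᶜ.induce t).cliqueNum)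
    (s : Finset V) :
    ∃ c, G.IsColoringOn s (G.induce s).cliqueNum c := by
  induction s using Finset.strongInduction with
  | H s ih => exact by_contra fun hs => (h s).not_gt (mul_lt_card_of_minimal_not_colorable ih hs)

theorem chromaticNumber_eq_cliqueNum_iff [Finite V] (G : SimpleGraph V) :
    G.chromaticNumber = G.cliqueNum ↔ G.Colorable G.cliqueNum :=
  ⟨fun h => chromaticNumber_le_iff_colorable.1 h.le,
    fun h => le_antisymm (chromaticNumber_le_iff_colorable.2 h) G.cliqueNum_le_chromaticNumber⟩

theorem isPerfect_iff_forall_exists_isColoringOn [Finite V] :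
    IsPerfect G ↔ ∀ s : Finset V, ∃ c, G.IsColoringOn s (G.induce s).cliqueNum c := by
  simp only [IsPerfect, chromaticNumber_eq_cliqueNum_iff, ← colorable_induce_iff]
  exact ⟨fun h s => h s, fun h W => W.toFinite.coe_toFinset ▸ h _⟩

theorem isPerfect_iff_forall_card_le_mul [Finite V] :
    IsPerfect G ↔
      ∀ s : Finset V, #s ≤ (G.induce s).cliqueNum * (Gᶜ.induce s).cliqueNum := by
  rw [isPerfect_iff_forall_exists_isColoringOn]
  exact ⟨fun h s => (h s).elim fun _ hc => hc.card_le_mul,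
    exists_isColoringOn_of_forall_card_le⟩

end SimpleGraph

/-- Weak Perfect Graph Theorem, Lovász: a finite graph is perfect if and
only if its complement is perfect. -/
theorem weak_perfect_graph_theorem {V : Type*} [Fintype V] (G : SimpleGraph V) :
    IsPerfect G ↔ IsPerfect Gᶜ := by
  rw [G.isPerfect_iff_forall_card_le_mul, Gᶜ.isPerfect_iff_forall_card_le_mul, compl_compl]
  exact forall_congr' fun s => by rw [mul_comm]
end

section
/- Let φ be a CNF formula with variable set X = {x_1, …, x_n} and clause set C = {C_1, …, C_m}, where each clause is a set of literals and no clause contains both a variable and its negation, and let G_φ be the graph associated to φ (defined in the context). Then the complement of G_φ contains no induced cycle of odd length at least 5. -/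
variable {V : Type*}

/-- The embedding `u : Fin k ↪ V` is an induced `k`-cycle in `G`: the vertices
`u 0, u 1, …, u (k-1)` are distinct and two of them are adjacent exactly when they are
consecutive (cyclically). -/
def IsInducedCycleOn (G : SimpleGraph V) {k : ℕ} (u : Fin k ↪ V) : Prop :=
  ∀ i j : Fin k, G.Adj (u i) (u j) ↔
    ((j : ℕ) = ((i : ℕ) + 1) % k ∨ (i : ℕ) = ((j : ℕ) + 1) % k)

/-- `G` contains an induced cycle of length `k`. -/
def HasInducedCycle (G : SimpleGraph V) (k : ℕ) : Prop :=
  ∃ u : Fin k ↪ V, IsInducedCycleOn G u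

/-- Vertices of the graph associated to a CNF formula with `n` variables and `m` clauses:
literal vertices `(x, b)` (the literal is `x` if `b = true` and `¬x` if `b = false`),
and two clause vertices for each clause. -/
abbrev FormulaVertex (n m : ℕ) := (Fin n × Bool) ⊕ (Fin m × Fin 2)

/-- Adjacency of the graph associated to a CNF formula: two literal vertices are adjacent
iff they belong to distinct variables; a literal vertex is adjacent to a clause vertex iff
the literal does not occur in the clause; clause vertices are pairwise non-adjacent. -/
def formulaAdj {n m : ℕ} (C : Fin m → Finset (Fin n × Bool)) :
    FormulaVertex n m → FormulaVertex n m → Prop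
  | .inl p, .inl q => p.1 ≠ q.1
  | .inl q, .inr c => q ∉ C c.1
  | .inr c, .inl q => q ∉ C c.1
  | .inr _, .inr _ => False

/-- The graph `G_φ` associated to a CNF formula `φ` whose clauses are given by
`C : Fin m → Finset (Fin n × Bool)`. -/
def formulaGraph {n m : ℕ} (C : Fin m → Finset (Fin n × Bool)) :
    SimpleGraph (FormulaVertex n m) where
  Adj := formulaAdj C
  symm := by
    constructor
    rintro (p | c) (q | d) h
    · exact fun e => h e.symm
    · exact h
    · exact h
    · exact h.elim
  loopless := by
    constructor
    rintro (p | c) h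
    · exact h rfl
    · exact h

/-- No clause contains both a variable and its negation. -/
def NoComplementaryLiterals {n m : ℕ} (C : Fin m → Finset (Fin n × Bool)) : Prop :=
  ∀ c : Fin m, ∀ x : Fin n, ¬ ((x, true) ∈ C c ∧ (x, false) ∈ C c)

/-! In the complement of `G_φ` the clause vertices form a clique `S`, and a literal vertex has
exactly one neighbour outside `S`, namely its negation. In any graph with such a clique, an
induced cycle `u₀ u₁ ⋯` of length at least `5` cannot exist. If `u₁, u₂ ∉ S`, then `u₂` is the
only neighbour of `u₁` outside `S` and vice versa, so `u₀, u₃ ∈ S`; but they are not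
consecutive. Hence one of any two consecutive vertices lies in `S`; rotating, `u₁` and `u₃` both
lie in `S`, again two non-consecutive vertices of a clique. -/

theorem isInducedCycleOn_iff {H : SimpleGraph V} {k : ℕ} [NeZero k] {u : Fin k ↪ V} :
    IsInducedCycleOn H u ↔ ∀ i j, H.Adj (u i) (u j) ↔ j = i + 1 ∨ i = j + 1 := by
  have hsucc (i j : Fin k) : (j : ℕ) = ((i : ℕ) + 1) % k ↔ j = i + 1 := by
    rw [Fin.ext_iff, Fin.val_add, Fin.val_one', Nat.add_mod_mod]
  simp only [IsInducedCycleOn, hsucc]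

namespace IsInducedCycleOn

variable {H : SimpleGraph V} {k : ℕ} {u : Fin k ↪ V}

theorem comp_addRight [NeZero k] (hu : IsInducedCycleOn H u) (i : Fin k) :
    IsInducedCycleOn H ((Equiv.addRight i).toEmbedding.trans u) := by
  rw [isInducedCycleOn_iff] at hu ⊢
  intro a b
  simp only [Function.Embedding.trans_apply, Equiv.coe_toEmbedding, Equiv.coe_addRight, hu,
    add_right_comm _ i 1, add_left_inj]

variable {S : Set V}

theorem consecutive_of_mem_clique (hu : IsInducedCycleOn H u) (hS : H.IsClique S) {a b : Fin k}
    (hab : a ≠ b) (ha : u a ∈ S) (hb : u b ∈ S) :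
    (b : ℕ) = ((a : ℕ) + 1) % k ∨ (a : ℕ) = ((b : ℕ) + 1) % k :=
  (hu a b).1 (hS ha hb (u.injective.ne hab))

variable [NeZero k]

theorem mem_or_mem_one_two (hu : IsInducedCycleOn H u) (hk : 5 ≤ k) (hS : H.IsClique S)
    (hmatch : ∀ v ∉ S, {w | H.Adj v w ∧ w ∉ S}.Subsingleton) : u 1 ∈ S ∨ u 2 ∈ S := by
  have hlt : ∀ a, a < 5 → a < k := fun a ha => ha.trans_le hk
  by_contra! ⟨h1, h2⟩
  have h0 : u 0 ∈ S := by
    by_contra h0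
    refine (by simp [Fin.ext_iff, Nat.mod_eq_of_lt, hlt] : (0 : Fin k) ≠ 2) (u.injective ?_)
    exact hmatch (u 1) h1 ⟨(hu 1 0).2 (by simp [Nat.mod_eq_of_lt, hlt]), h0⟩
      ⟨(hu 1 2).2 (by simp [Nat.mod_eq_of_lt, hlt]), h2⟩
  have h3 : u 3 ∈ S := by
    by_contra h3
    refine (by simp [Fin.ext_iff, Nat.mod_eq_of_lt, hlt] : (1 : Fin k) ≠ 3) (u.injective ?_)
    exact hmatch (u 2) h2 ⟨(hu 2 1).2 (by simp [Nat.mod_eq_of_lt, hlt]), h1⟩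
      ⟨(hu 2 3).2 (by simp [Nat.mod_eq_of_lt, hlt]), h3⟩
  have := hu.consecutive_of_mem_clique hS (a := 0) (b := 3)
    (by simp [Fin.ext_iff, Nat.mod_eq_of_lt, hlt]) h0 h3
  simp [Nat.mod_eq_of_lt, hlt] at this

theorem mem_or_mem_add_one_add_two (hu : IsInducedCycleOn H u) (hk : 5 ≤ k) (hS : H.IsClique S)
    (hmatch : ∀ v ∉ S, {w | H.Adj v w ∧ w ∉ S}.Subsingleton) (i : Fin k) :
    u (i + 1) ∈ S ∨ u (i + 2) ∈ S := by
  simpa [add_comm] using (hu.comp_addRight i).mem_or_mem_one_two hk hS hmatch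

open Fin.CommRing in
theorem mem_one (hu : IsInducedCycleOn H u) (hk : 5 ≤ k) (hS : H.IsClique S)
    (hmatch : ∀ v ∉ S, {w | H.Adj v w ∧ w ∉ S}.Subsingleton) : u 1 ∈ S := by
  have hlt : ∀ a, a < 5 → a < k := fun a ha => ha.trans_le hk
  have h01 : u 0 ∈ S ∨ u 1 ∈ S := by
    convert hu.mem_or_mem_add_one_add_two hk hS hmatch (-1) using 3 <;> norm_num
  have h23 : u 2 ∈ S ∨ u 3 ∈ S := by
    convert hu.mem_or_mem_add_one_add_two hk hS hmatch 1 using 3 <;> norm_num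
  refine h01.resolve_left fun h0 => ?_
  rcases h23 with h | h <;>
  · have := hu.consecutive_of_mem_clique hS (by simp [Fin.ext_iff, Nat.mod_eq_of_lt, hlt]) h0 h
    simp [Nat.mod_eq_of_lt, hlt] at this

end IsInducedCycleOn

open Fin.CommRing in
theorem SimpleGraph.IsClique.not_hasInducedCycle {H : SimpleGraph V} {S : Set V} {k : ℕ}
    (hS : H.IsClique S) (hmatch : ∀ v ∉ S, {w | H.Adj v w ∧ w ∉ S}.Subsingleton) (hk : 5 ≤ k) :
    ¬ HasInducedCycle H k := by
  rintro ⟨u, hu⟩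
  have : NeZero k := ⟨by omega⟩
  have hlt : ∀ a, a < 5 → a < k := fun a ha => ha.trans_le hk
  have h1 := hu.mem_one hk hS hmatch
  have h3 : u 3 ∈ S := by
    simpa [show (1 : Fin k) + 2 = 3 by norm_num] using (hu.comp_addRight 2).mem_one hk hS hmatch
  have := hu.consecutive_of_mem_clique hS (a := 1) (b := 3)
    (by simp [Fin.ext_iff, Nat.mod_eq_of_lt, hlt]) h1 h3
  simp [Nat.mod_eq_of_lt, hlt] at this

section formulaGraph

variable {n m : ℕ} (C : Fin m → Finset (Fin n × Bool))

theorem formulaGraph_compl_isClique_range_inr :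
    (formulaGraph C)ᶜ.IsClique (Set.range Sum.inr) := by
  rintro _ ⟨c, rfl⟩ _ ⟨d, rfl⟩ hne
  exact ⟨hne, id⟩

theorem formulaGraph_compl_adj_inl_inl {p q : Fin n × Bool} :
    (formulaGraph C)ᶜ.Adj (.inl p) (.inl q) ↔ q = (p.1, !p.2) := by
  obtain ⟨x, a⟩ := p
  obtain ⟨y, b⟩ := q
  cases a <;> cases b <;> simp [formulaGraph, formulaAdj, eq_comm]

theorem formulaGraph_compl_subsingleton_adj_notMem_range_inr :
    ∀ v ∉ Set.range Sum.inr,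
      {w | (formulaGraph C)ᶜ.Adj v w ∧ w ∉ Set.range Sum.inr}.Subsingleton := by
  rintro (p | c) hv (q | d) ⟨hq, hd⟩ (q' | d') ⟨hq', hd'⟩
  · rw [formulaGraph_compl_adj_inl_inl] at hq hq'
    rw [hq, hq']
  all_goals simp at hv hd hd'

end formulaGraph

theorem formulaGraph_compl_no_odd_hole_general {n m : ℕ} (C : Fin m → Finset (Fin n × Bool)) :
    ∀ k : ℕ, 5 ≤ k → Odd k → ¬ HasInducedCycle (formulaGraph C)ᶜ k := fun _ hk _ =>
  (formulaGraph_compl_isClique_range_inr C).not_hasInducedCycle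
    (formulaGraph_compl_subsingleton_adj_notMem_range_inr C) hk

/-- the complement of the graph associated to a CNF formula contains no
induced cycle of odd length at least `5`. -/
theorem formulaGraph_compl_no_odd_hole {n m : ℕ} (C : Fin m → Finset (Fin n × Bool))
    (hC : NoComplementaryLiterals C) :
    ∀ k : ℕ, 5 ≤ k → Odd k → ¬ HasInducedCycle (formulaGraph C)ᶜ k :=
  formulaGraph_compl_no_odd_hole_general C
end

section
/- Let φ be a CNF formula with variable set X = {x_1, …, x_n} and clause set C = {C_1, …, C_m}, where each clause is a set of literals and no clause contains both a variable and its negation, and let G_φ be the graph associated to φ (defined in the context). Then G_φ contains no induced cycle of odd length at least 5. -/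
variable {V : Type*}

/-!
Clause vertices are pairwise non-adjacent, so an odd cycle cannot alternate between literal and
clause vertices: it has two consecutive literal vertices, on distinct variables. Among literal
vertices non-adjacency means "same variable", which is transitive, so the literal vertices induce
a complete multipartite graph. In a hole of length at least 5 the vertex three steps after the
first of the two consecutive literals is non-adjacent to both; whether it is a literal itself or
a clause vertex flanked by two literals, a chain of non-adjacent literals then joins the two
consecutive ones, contradicting their adjacency.
-/

theorem exists_iff_succ_of_odd {p : ℕ → Prop} {k : ℕ} (hk : Odd k) (hp : p k ↔ p 0) :
    ∃ s, p s ↔ p (s + 1) := by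
  by_contra h
  have alternate (s : ℕ) : ¬p s ↔ p (s + 1) := not_iff.mp (not_exists.mp h s)
  have even (j : ℕ) : p (2 * j) ↔ p 0 := by
    induction j with
    | zero => rfl
    | succ j ih =>
      rw [show 2 * (j + 1) = 2 * j + 1 + 1 by ring, ← alternate, ← alternate, not_not, ih]
  obtain ⟨j, rfl⟩ := hk
  have := alternate (2 * j)
  have := even j
  tauto

theorem Nat.add_mod_ne_mod {a d k : ℕ} (hd0 : 0 < d) (hdk : d < k) : (a + d) % k ≠ a % k := by
  intro h
  have hdvd : k ∣ d := by
    simpa using (Nat.modEq_iff_dvd' (Nat.le_add_right a d)).mp h.symm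
  exact absurd (Nat.le_of_dvd hd0 hdvd) (by omega)

namespace IsInducedCycleOn

variable {G : SimpleGraph V} {k : ℕ} [NeZero k] {u : Fin k ↪ V}

theorem adj_succ (hu : IsInducedCycleOn G u) (s : ℕ) :
    G.Adj (u (Fin.ofNat k s)) (u (Fin.ofNat k (s + 1))) :=
  (hu _ _).mpr (.inl (by simp only [Fin.val_ofNat, Nat.mod_add_mod]))

theorem not_adj_add (hu : IsInducedCycleOn G u) (s : ℕ) {d : ℕ} (hd : 2 ≤ d)
    (hdk : d + 2 ≤ k) :
    ¬G.Adj (u (Fin.ofNat k s)) (u (Fin.ofNat k (s + d))) := by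
  rw [hu]
  simp only [Fin.val_ofNat, Nat.mod_add_mod]
  rintro (h | h)
  · exact Nat.add_mod_ne_mod (a := s + 1) (d := d - 1) (k := k) (by omega) (by omega)
      (by rwa [show s + 1 + (d - 1) = s + d by omega])
  · exact Nat.add_mod_ne_mod (a := s) (d := d + 1) (k := k) (by omega) (by omega) h.symm

variable {L : Set V}

theorem mem_or_succ_mem (hu : IsInducedCycleOn G u) (hL : IndepSet G Lᶜ) (s : ℕ) :
    u (Fin.ofNat k s) ∈ L ∨ u (Fin.ofNat k (s + 1)) ∈ L := by
  by_contra! h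
  exact hL h.1 h.2 (hu.adj_succ s).ne (hu.adj_succ s)

theorem exists_succ_mem (hu : IsInducedCycleOn G u) (hL : IndepSet G Lᶜ) (hk : Odd k) :
    ∃ t, u (Fin.ofNat k t) ∈ L ∧ u (Fin.ofNat k (t + 1)) ∈ L := by
  have hper : Fin.ofNat k k = Fin.ofNat k 0 := by ext; simp
  obtain ⟨t, ht⟩ :=
    exists_iff_succ_of_odd (p := fun s => u (Fin.ofNat k s) ∈ L) hk (by rw [hper])
  have := hu.mem_or_succ_mem hL t
  exact ⟨t, by tauto⟩

theorem not_succ_mem (hu : IsInducedCycleOn G u) (hL : IndepSet G Lᶜ)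
    (hmult : (G.induce L).IsCompleteMultipartite) (hk : 5 ≤ k) (t : ℕ) :
    ¬(u (Fin.ofNat k t) ∈ L ∧ u (Fin.ofNat k (t + 1)) ∈ L) := by
  rintro ⟨h0, h1⟩
  have nonadj_trans {a b c : V} (ha : a ∈ L) (hb : b ∈ L) (hc : c ∈ L) :
      ¬G.Adj a b → ¬G.Adj b c → ¬G.Adj a c :=
    hmult.trans ⟨a, ha⟩ ⟨b, hb⟩ ⟨c, hc⟩
  have nonadj2 (s : ℕ) := hu.not_adj_add s (d := 2) le_rfl (by omega)
  have nonadj3 (s : ℕ) := hu.not_adj_add s (d := 3) (by norm_num) (by omega)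
  refine absurd (hu.adj_succ t) ?_
  by_cases h3 : u (Fin.ofNat k (t + 3)) ∈ L
  · exact nonadj_trans h0 h3 h1 (nonadj3 t) (fun h => nonadj2 (t + 1) h.symm)
  · have h2 := (hu.mem_or_succ_mem hL (t + 2)).resolve_right h3
    have h4 := (hu.mem_or_succ_mem hL (t + 3)).resolve_left h3
    exact nonadj_trans h0 h2 h1 (nonadj2 t)
      (nonadj_trans h2 h4 h1 (nonadj2 (t + 2)) (fun h => nonadj3 (t + 1) h.symm))

end IsInducedCycleOn

theorem not_hasInducedCycle_of_odd {G : SimpleGraph V} {L : Set V} (hL : IndepSet G Lᶜ)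
    (hmult : (G.induce L).IsCompleteMultipartite) {k : ℕ} (hk : 5 ≤ k) (hodd : Odd k) :
    ¬HasInducedCycle G k := by
  rintro ⟨u, hu⟩
  have : NeZero k := ⟨by omega⟩
  obtain ⟨t, ht⟩ := hu.exists_succ_mem hL hodd
  exact hu.not_succ_mem hL hmult hk t ht

theorem indepSet_formulaGraph_clauses {n m : ℕ} (C : Fin m → Finset (Fin n × Bool)) :
    IndepSet (formulaGraph C) (Set.range Sum.inl)ᶜ := by
  rintro (p | c) hp (q | d) hq - h
  · exact hp ⟨p, rfl⟩
  · exact hp ⟨p, rfl⟩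
  · exact hq ⟨q, rfl⟩
  · exact h

theorem isCompleteMultipartite_formulaGraph_literals {n m : ℕ}
    (C : Fin m → Finset (Fin n × Bool)) :
    ((formulaGraph C).induce (Set.range Sum.inl)).IsCompleteMultipartite := by
  refine ⟨?_⟩
  rintro ⟨_, p, rfl⟩ ⟨_, q, rfl⟩ ⟨_, r, rfl⟩ (hpq : ¬p.1 ≠ q.1) (hqr : ¬q.1 ≠ r.1)
    (hpr : p.1 ≠ r.1)
  exact hpr ((not_not.mp hpq).trans (not_not.mp hqr))

theorem formulaGraph_no_odd_hole_general {n m : ℕ} (C : Fin m → Finset (Fin n × Bool)) :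
    ∀ k : ℕ, 5 ≤ k → Odd k → ¬ HasInducedCycle (formulaGraph C) k :=
  fun _ hk hodd => not_hasInducedCycle_of_odd (indepSet_formulaGraph_clauses C)
    (isCompleteMultipartite_formulaGraph_literals C) hk hodd

/-- the graph associated to a CNF formula contains no induced cycle of odd
length at least `5`. -/
theorem formulaGraph_no_odd_hole {n m : ℕ} (C : Fin m → Finset (Fin n × Bool))
    (hC : NoComplementaryLiterals C) :
    ∀ k : ℕ, 5 ≤ k → Odd k → ¬ HasInducedCycle (formulaGraph C) k :=
  formulaGraph_no_odd_hole_general C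
end

section
/- Let φ be a CNF formula with variable set X = {x_1, …, x_n} and clause set C = {C_1, …, C_m}, where each clause is a set of literals and no clause contains both a variable and its negation, and let G_φ be the graph associated to φ (defined in the context). Then every induced cycle of odd length at least 5 in G_φ contains at most 3 literal vertices. -/
variable {V : Type*}

/-!
Two distinct literal vertices are non-adjacent only when they are complementary, so each literal
vertex has at most one non-neighbour among the other literal vertices. In an induced cycle of
length at least `5`, however, among any four of its vertices `a₀ < a₁ < a₂ < a₃` (in cyclic
order) the pairs `a₀a₂` and `a₁a₃` are non-adjacent, and one side of the quadrilateral
`a₀a₁a₂a₃` is missing too, since otherwise the cycle would have length `4`. The endpoint of that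
missing side with a diagonal non-edge has two non-neighbours among the four.
-/

section InducedCycle

variable {G : SimpleGraph V} {k : ℕ} {u : Fin k ↪ V}

lemma IsInducedCycleOn.adj_iff_of_lt (hu : IsInducedCycleOn G u) {i j : Fin k} (hij : i < j) :
    G.Adj (u i) (u j) ↔ (j : ℕ) = i + 1 ∨ ((i : ℕ) = 0 ∧ (j : ℕ) + 1 = k) := by
  have hij : (i : ℕ) < j := hij
  rw [hu, Nat.mod_eq_of_lt (show (i : ℕ) + 1 < k by omega)]
  rcases Nat.lt_or_eq_of_le (show (j : ℕ) + 1 ≤ k from j.isLt) with hj | hj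
  · rw [Nat.mod_eq_of_lt hj]
    omega
  · rw [hj, Nat.mod_self]
    omega

lemma IsInducedCycleOn.exists_two_nonadj_of_four_le_card (hu : IsInducedCycleOn G u)
    (hk : 5 ≤ k) {s : Finset (Fin k)} (hs : 4 ≤ s.card) :
    ∃ i ∈ s, ∃ j ∈ s, ∃ l ∈ s, j ≠ l ∧ i ≠ j ∧ i ≠ l ∧
      ¬G.Adj (u i) (u j) ∧ ¬G.Adj (u i) (u l) := by
  obtain ⟨t, hts, ht⟩ := Finset.exists_subset_card_eq hs
  set a := t.orderEmbOfFin ht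
  have mem (j : Fin 4) : a j ∈ s := hts (t.orderEmbOfFin_mem ht j)
  have ne {i j : Fin 4} (h : i ≠ j) : a i ≠ a j := a.injective.ne h
  have adj {i j : Fin 4} (h : i < j) := hu.adj_iff_of_lt (a.strictMono h)
  have lt01 : (a 0 : ℕ) < a 1 := a.strictMono (by decide)
  have lt12 : (a 1 : ℕ) < a 2 := a.strictMono (by decide)
  have lt23 : (a 2 : ℕ) < a 3 := a.strictMono (by decide)
  have lt3 : (a 3 : ℕ) < k := (a 3).isLt
  have n02 : ¬G.Adj (u (a 0)) (u (a 2)) := by rw [adj (by decide)]; omega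
  have n13 : ¬G.Adj (u (a 1)) (u (a 3)) := by rw [adj (by decide)]; omega
  have side : ¬(G.Adj (u (a 0)) (u (a 1)) ∧ G.Adj (u (a 1)) (u (a 2)) ∧
      G.Adj (u (a 2)) (u (a 3)) ∧ G.Adj (u (a 0)) (u (a 3))) := by
    rw [adj (by decide), adj (by decide), adj (by decide), adj (by decide)]
    omega
  simp only [not_and_or] at side
  rcases side with h | h | h | h
  · exact ⟨_, mem 0, _, mem 1, _, mem 2, ne (by decide), ne (by decide), ne (by decide), h, n02⟩
  · exact ⟨_, mem 1, _, mem 2, _, mem 3, ne (by decide), ne (by decide), ne (by decide), h, n13⟩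
  · exact ⟨_, mem 2, _, mem 3, _, mem 0, ne (by decide), ne (by decide), ne (by decide), h,
      fun h' => n02 h'.symm⟩
  · exact ⟨_, mem 3, _, mem 0, _, mem 1, ne (by decide), ne (by decide), ne (by decide),
      fun h' => h h'.symm, fun h' => n13 h'.symm⟩

end InducedCycle

lemma formulaGraph_eq_neg_of_not_adj {n m : ℕ} {C : Fin m → Finset (Fin n × Bool)}
    {p q : Fin n × Bool} (hpq : p ≠ q) (h : ¬(formulaGraph C).Adj (.inl p) (.inl q)) :
    q = (p.1, !p.2) := by
  obtain ⟨x, b⟩ := p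
  obtain ⟨y, c⟩ := q
  obtain rfl : x = y := not_not.mp h
  cases b <;> cases c <;> simp_all

theorem formulaGraph_odd_hole_few_literal_vertices_general {n m : ℕ}
    (C : Fin m → Finset (Fin n × Bool))
    (k : ℕ) (hk : 5 ≤ k) (u : Fin k ↪ FormulaVertex n m)
    (hu : IsInducedCycleOn (formulaGraph C) u) :
    (Finset.univ.filter fun i : Fin k => (u i).isLeft = true).card ≤ 3 := by
  by_contra! hcard
  obtain ⟨i, hi, j, hj, l, hl, hjl, hij, hil, hnij, hnil⟩ :=
    hu.exists_two_nonadj_of_four_le_card hk hcard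
  simp only [Finset.mem_filter, Finset.mem_univ, true_and, Sum.isLeft_iff] at hi hj hl
  obtain ⟨p, hp⟩ := hi
  obtain ⟨q, hq⟩ := hj
  obtain ⟨r, hr⟩ := hl
  rw [hp, hq] at hnij
  rw [hp, hr] at hnil
  have hpq : p ≠ q := fun h => hij (u.injective (by rw [hp, hq, h]))
  have hpr : p ≠ r := fun h => hil (u.injective (by rw [hp, hr, h]))
  refine hjl (u.injective ?_)
  rw [hq, hr, formulaGraph_eq_neg_of_not_adj hpq hnij, formulaGraph_eq_neg_of_not_adj hpr hnil]

/-- every induced cycle of odd length at least `5` in the graph associated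
to a CNF formula contains at most `3` literal vertices. -/
theorem formulaGraph_odd_hole_few_literal_vertices {n m : ℕ}
    (C : Fin m → Finset (Fin n × Bool)) (hC : NoComplementaryLiterals C)
    (k : ℕ) (hk : 5 ≤ k) (hodd : Odd k) (u : Fin k ↪ FormulaVertex n m)
    (hu : IsInducedCycleOn (formulaGraph C) u) :
    (Finset.univ.filter fun i : Fin k => (u i).isLeft = true).card ≤ 3 :=
  formulaGraph_odd_hole_few_literal_vertices_general C k hk u hu
end

section
/- Let φ be a CNF formula with variable set X = {x_1, …, x_n} and clause set C = {C_1, …, C_m}, where each clause is a set of literals and no clause contains both a variable and its negation, and let G_φ be the graph associated to φ (defined in the context). Then G_φ is a perfect graph. -/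
variable {V : Type*}

/-! For a vertex set `W`, let `X` be the set of variables having a literal vertex in `W`. Literal vertices of distinct
variables are adjacent, so one literal of `W` per variable of `X` is a clique, and colouring each
literal by its variable is proper. Clause vertices are pairwise non-adjacent. If some clause vertex
of `W` is adjacent to a literal of `W` of every variable of `X`, it extends that clique, and one
extra colour shared by all clause vertices gives an `(|X| + 1)`-colouring. Otherwise every clause
vertex has a variable none of whose literals in `W` it is adjacent to, and can take that
variable's colour: `W` is `|X|`-colourable. -/

namespace SimpleGraph

variable {V : Type*} {G : SimpleGraph V} {N : ℕ}

theorem chromaticNumber_eq_cliqueNum_of_isNClique {s : Finset V} (hc : G.Colorable N)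
    (hs : G.IsNClique N s) : G.chromaticNumber = G.cliqueNum := by
  have hbdd : BddAbove {k | ∃ t, G.IsNClique k t} :=
    ⟨N, fun _ ⟨_, ht⟩ => ht.card_eq ▸ ht.isClique.card_le_of_colorable hc⟩
  have hN : N ≤ G.cliqueNum := le_csSup hbdd ⟨s, hs⟩
  exact le_antisymm (hc.chromaticNumber_le.trans (by exact_mod_cast hN))
    G.cliqueNum_le_chromaticNumber

theorem chromaticNumber_induce_eq_cliqueNum_of_isNClique {W : Set V} {s : Finset V}
    (hc : (G.induce W).Colorable N) (hsW : ↑s ⊆ W) (hs : G.IsNClique N s) :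
    (G.induce W).chromaticNumber = (G.induce W).cliqueNum := by
  classical
  refine chromaticNumber_eq_cliqueNum_of_isNClique (s := s.subtype (· ∈ W)) hc ?_
  rwa [isNClique_induce_iff, Finset.subtype_map_of_mem fun _ hx => hsW hx]

end SimpleGraph

open SimpleGraph Finset

section FormulaGraph

variable {n m : ℕ} (C : Fin m → Finset (Fin n × Bool))

@[simp]
theorem formulaGraph_adj_inr_inl {q : Fin n × Bool} {c : Fin m × Fin 2} :
    (formulaGraph C).Adj (.inr c) (.inl q) ↔ q ∉ C c.1 :=
  Iff.rfl

open Classical in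
noncomputable def literalVars (W : Set (FormulaVertex n m)) : Finset (Fin n) :=
  {x | ∃ b, .inl (x, b) ∈ W}

variable {C} {W : Set (FormulaVertex n m)}

@[simp]
theorem mem_literalVars {x : Fin n} : x ∈ literalVars W ↔ ∃ b, .inl (x, b) ∈ W := by
  simp [literalVars]

def SeesEveryVar (C : Fin m → Finset (Fin n × Bool)) (W : Set (FormulaVertex n m)) (c : Fin m) :
    Prop :=
  ∀ x ∈ literalVars W, ∃ b, .inl (x, b) ∈ W ∧ (x, b) ∉ C c

theorem isNClique_image_literal (X : Finset (Fin n)) (g : Fin n → Bool) :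
    (formulaGraph C).IsNClique #X (X.image fun x => .inl (x, g x)) := by
  refine ⟨?_, card_image_of_injective _ fun x y h => (by simpa using h : x = y ∧ _).1⟩
  simp only [coe_image]
  rintro _ ⟨x, -, rfl⟩ _ ⟨y, -, rfl⟩ hne
  exact fun hxy : x = y => hne (hxy ▸ rfl)

theorem exists_isNClique_literalVars (C : Fin m → Finset (Fin n × Bool))
    (W : Set (FormulaVertex n m)) :
    ∃ s : Finset (FormulaVertex n m), ↑s ⊆ W ∧ (formulaGraph C).IsNClique #(literalVars W) s := by
  choose! g hg using fun x (hx : x ∈ literalVars W) => mem_literalVars.1 hx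
  refine ⟨_, ?_, isNClique_image_literal _ g⟩
  simpa [Set.subset_def] using hg

theorem exists_isNClique_succ_of_seesEveryVar {p : Fin m × Fin 2} (hpW : .inr p ∈ W)
    (hp : SeesEveryVar C W p.1) :
    ∃ s : Finset (FormulaVertex n m), ↑s ⊆ W ∧
      (formulaGraph C).IsNClique (#(literalVars W) + 1) s := by
  choose! g hgW hgC using hp
  refine ⟨insert (.inr p) _, ?_, (isNClique_image_literal _ g).insert ?_⟩
  · simpa [Set.insert_subset_iff, Set.subset_def, hpW] using hgW
  · simpa using hgC

theorem colorable_induce_card_literalVars_succ (C : Fin m → Finset (Fin n × Bool))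
    (W : Set (FormulaVertex n m)) :
    ((formulaGraph C).induce W).Colorable (#(literalVars W) + 1) := by
  let f : W → Option (literalVars W)
    | ⟨.inl q, hq⟩ => some ⟨q.1, mem_literalVars.2 ⟨q.2, hq⟩⟩
    | ⟨.inr _, _⟩ => none
  suffices hf : ∀ {u v}, ((formulaGraph C).induce W).Adj u v → f u ≠ f v by
    simpa using (Coloring.mk f hf).colorable
  rintro ⟨(q | c), _⟩ ⟨(q' | c'), _⟩ hadj hf
  · exact hadj (by simpa [f] using hf)
  · simp [f] at hf
  · simp [f] at hf
  · exact hadj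

theorem colorable_induce_card_literalVars (h : ∀ p, .inr p ∈ W → ¬ SeesEveryVar C W p.1) :
    ((formulaGraph C).induce W).Colorable #(literalVars W) := by
  simp only [SeesEveryVar, not_forall, not_exists, not_and, not_not] at h
  choose κ hκ hκC using h
  let f : W → literalVars W
    | ⟨.inl q, hq⟩ => ⟨q.1, mem_literalVars.2 ⟨q.2, hq⟩⟩
    | ⟨.inr p, hp⟩ => ⟨κ p hp, hκ p hp⟩
  suffices hf : ∀ {u v}, ((formulaGraph C).induce W).Adj u v → f u ≠ f v by
    simpa using (Coloring.mk f hf).colorable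
  rintro ⟨(⟨x, b⟩ | c), hu⟩ ⟨(⟨y, b'⟩ | c'), hv⟩ hadj hf <;>
    simp only [f, Subtype.mk.injEq] at hf
  · exact hadj hf
  · subst hf
    exact hadj (hκC c' hv b hu)
  · subst hf
    exact hadj (hκC c hu b' hv)
  · exact hadj

end FormulaGraph

theorem formulaGraph_isPerfect_general {n m : ℕ} (C : Fin m → Finset (Fin n × Bool)) :
    IsPerfect (formulaGraph C) := by
  intro W
  by_cases h : ∃ p, .inr p ∈ W ∧ SeesEveryVar C W p.1
  · obtain ⟨p, hpW, hp⟩ := h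
    obtain ⟨s, hsW, hs⟩ := exists_isNClique_succ_of_seesEveryVar hpW hp
    exact chromaticNumber_induce_eq_cliqueNum_of_isNClique
      (colorable_induce_card_literalVars_succ C W) hsW hs
  · obtain ⟨s, hsW, hs⟩ := exists_isNClique_literalVars C W
    exact chromaticNumber_induce_eq_cliqueNum_of_isNClique
      (colorable_induce_card_literalVars fun p hpW hp => h ⟨p, hpW, hp⟩) hsW hs

/-- the graph associated to a CNF formula is perfect. -/
theorem formulaGraph_isPerfect {n m : ℕ} (C : Fin m → Finset (Fin n × Bool))
    (hC : NoComplementaryLiterals C) :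
    IsPerfect (formulaGraph C) :=
  formulaGraph_isPerfect_general C
end
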